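/- arXiv:1907.07335 — 4 statements merged into one kernel-verified Lean document; each statement's English description precedes it below -/
import Mathlib

section
/- There exists a constant C > 0 such that for all a ≥ 1, ∫_{a}^{∞} (s² − a²)^{−1/2} e^{−2s} ds ≤ C a^{−1/2} e^{−2a}. -/
/-!
Since `s ^ 2 - a ^ 2 = (s - a) (s + a) ≥ 2 a (s - a)` for `s ≥ a > 0`, the integrand is at most
`(2 a)^{-1/2} e^{-2 s} (s - a)^{-1/2}`. Translating by `a`, the integral of the latter is
`(2 a)^{-1/2} e^{-2 a} ∫₀^∞ t^{-1/2} e^{-2 t} dt = (2 a)^{-1/2} e^{-2 a} Γ(1/2) / √2`,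
which is `(√π / 2) a^{-1/2} e^{-2 a}`.
-/

open MeasureTheory Set Real

lemma integrableOn_Ioi_comp_sub_iff {E : Type*} [NormedAddCommGroup E] (f : ℝ → E) (a : ℝ) :
    IntegrableOn (fun s ↦ f (s - a)) (Ioi a) ↔ IntegrableOn f (Ioi 0) := by
  have := (measurePreserving_sub_right volume a).integrableOn_comp_preimage
    (measurableEmbedding_subRight a) (f := f) (s := Ioi 0)
  rwa [preimage_sub_const_Ioi, zero_add] at this

lemma integral_Ioi_comp_sub {E : Type*} [NormedAddCommGroup E] [NormedSpace ℝ E]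
    (f : ℝ → E) (a : ℝ) :
    ∫ s in Ioi a, f (s - a) = ∫ t in Ioi 0, f t := by
  have := (measurePreserving_sub_right volume a).setIntegral_preimage_emb
    (measurableEmbedding_subRight a) f (Ioi 0)
  rwa [preimage_sub_const_Ioi, zero_add] at this

lemma rpow_neg_one_half_eq_inv_sqrt {t : ℝ} (ht : 0 ≤ t) : t ^ (-(1 / 2) : ℝ) = (√t)⁻¹ := by
  rw [rpow_neg ht, ← sqrt_eq_rpow]

lemma integrableOn_exp_neg_mul_div_sqrt {b : ℝ} (hb : 0 < b) :
    IntegrableOn (fun t ↦ exp (-b * t) / √t) (Ioi 0) := by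
  refine (integrableOn_rpow_mul_exp_neg_mul_rpow (p := 1) (s := -(1 / 2)) (by norm_num)
    one_pos hb).congr_fun (fun t (ht : 0 < t) ↦ ?_) measurableSet_Ioi
  dsimp only
  rw [rpow_one, rpow_neg_one_half_eq_inv_sqrt ht.le, div_eq_inv_mul]

lemma integral_exp_neg_mul_div_sqrt {b : ℝ} (hb : 0 < b) :
    ∫ t in Ioi 0, exp (-b * t) / √t = √(π / b) := by
  have hGamma := integral_rpow_mul_exp_neg_mul_Ioi (a := 1 / 2) one_half_pos hb
  rw [Gamma_one_half_eq, ← sqrt_eq_rpow, one_div b, sqrt_inv, ← div_eq_inv_mul,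
    ← sqrt_div' _ hb.le] at hGamma
  rw [← hGamma]
  refine setIntegral_congr_fun measurableSet_Ioi fun t (ht : 0 < t) ↦ ?_
  rw [show (1 / 2 - 1 : ℝ) = -(1 / 2) by norm_num, rpow_neg_one_half_eq_inv_sqrt ht.le, neg_mul,
    div_eq_inv_mul]

lemma exp_neg_mul_div_sqrt_sub_eq (b a : ℝ) :
    (fun s ↦ exp (-b * s) / √(s - a)) =
      fun s ↦ exp (-b * a) * (exp (-b * (s - a)) / √(s - a)) := by
  ext s
  rw [← mul_div_assoc, ← exp_add]
  ring_nf

lemma integrableOn_exp_neg_mul_div_sqrt_sub {b : ℝ} (hb : 0 < b) (a : ℝ) :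
    IntegrableOn (fun s ↦ exp (-b * s) / √(s - a)) (Ioi a) := by
  rw [exp_neg_mul_div_sqrt_sub_eq]
  exact ((integrableOn_Ioi_comp_sub_iff _ a).2 (integrableOn_exp_neg_mul_div_sqrt hb)).const_mul _

lemma integral_exp_neg_mul_div_sqrt_sub {b : ℝ} (hb : 0 < b) (a : ℝ) :
    ∫ s in Ioi a, exp (-b * s) / √(s - a) = exp (-b * a) * √(π / b) := by
  rw [exp_neg_mul_div_sqrt_sub_eq, integral_const_mul,
    integral_Ioi_comp_sub (fun t ↦ exp (-b * t) / √t), integral_exp_neg_mul_div_sqrt hb]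

lemma sqrt_two_mul_mul_sqrt_sub_le_sqrt_sq_sub_sq {a s : ℝ} (ha : 0 ≤ a) (hs : a ≤ s) :
    √(2 * a) * √(s - a) ≤ √(s ^ 2 - a ^ 2) := by
  rw [← sqrt_mul (by positivity)]
  exact sqrt_le_sqrt (by nlinarith)

lemma div_sqrt_sq_sub_sq_le {a s c : ℝ} (ha : 0 < a) (hs : a < s) (hc : 0 ≤ c) :
    c / √(s ^ 2 - a ^ 2) ≤ (√(2 * a))⁻¹ * (c / √(s - a)) := by
  have hsa := sub_pos.2 hs
  rw [inv_mul_eq_div, div_div, mul_comm (√(s - a))]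
  exact div_le_div_of_nonneg_left hc (by positivity)
    (sqrt_two_mul_mul_sqrt_sub_le_sqrt_sq_sub_sq ha.le hs.le)

/-- There exists `C > 0` such that for all `a ≥ 1`,
`∫_{a}^{∞} (s² − a²)^{−1/2} e^{−2s} ds ≤ C a^{−1/2} e^{−2a}`. -/
theorem tail_integral_bound :
    ∃ C : ℝ, 0 < C ∧ ∀ a : ℝ, 1 ≤ a →
      (∫ s in Set.Ioi a, Real.exp (-2 * s) / Real.sqrt (s ^ 2 - a ^ 2))
        ≤ C * a ^ (-(1 : ℝ) / 2) * Real.exp (-2 * a) := by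
  refine ⟨√π / 2, by positivity, fun a ha ↦ ?_⟩
  have ha0 : 0 < a := by linarith
  calc ∫ s in Ioi a, exp (-2 * s) / √(s ^ 2 - a ^ 2)
      ≤ ∫ s in Ioi a, (√(2 * a))⁻¹ * (exp (-2 * s) / √(s - a)) := by
        refine integral_mono_of_nonneg (ae_of_all _ fun s ↦ by positivity)
          ((integrableOn_exp_neg_mul_div_sqrt_sub two_pos a).const_mul _) ?_
        exact (ae_restrict_iff' measurableSet_Ioi).2 <| ae_of_all _ fun s hs ↦
          div_sqrt_sq_sub_sq_le ha0 hs (exp_pos _).le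
    _ = (√(2 * a))⁻¹ * (exp (-2 * a) * √(π / 2)) := by
        rw [integral_const_mul, integral_exp_neg_mul_div_sqrt_sub two_pos]
    _ = √π / 2 * a ^ (-(1 : ℝ) / 2) * exp (-2 * a) := by
        rw [neg_div, rpow_neg ha0.le, ← sqrt_eq_rpow, sqrt_mul zero_le_two,
          sqrt_div' _ zero_le_two]
        field_simp
        rw [sq_sqrt zero_le_two]
end

section
/- There exist constants 0 < c ≤ C such that for all a ≥ 1, c · a^{−1/2} e^{−2a} ≤ ∫_{ℝ} (x₁² + a²)^{−1/2} · exp(−2 (x₁² + a²)^{1/2}) dx₁ ≤ C · a^{−1/2} e^{−2a}. -/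
open MeasureTheory Real

/-!
Write `s = √(x² + a²)`, so that the integrand is `e^{-2a} e^{-2(s - a)} / s`. Near the origin,
`|x| ≤ √a`, one has `s ≤ a + 1/2`, so the integrand is `≳ e^{-2a} / a` on an interval of length
`2√a`. For the upper bound, `s ≥ a` and `2(s - a) = 2x² / (s + a)` is at least `x² / (2a)` when
`|x| ≤ 2a` and at least `|x|` otherwise; since `e^{-y} ≤ 2 / (1 + y²)`, the integrand is dominated
by `e^{-2a} / a` times a Gaussian of variance `≂ a` plus a Cauchy density, whose integral is `≂ √a`.
-/

noncomputable def lineIntegrand (a x : ℝ) : ℝ :=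
  exp (-2 * √(x ^ 2 + a ^ 2)) / √(x ^ 2 + a ^ 2)

lemma exp_neg_le_two_mul_inv_one_add_sq {y : ℝ} (hy : 0 ≤ y) :
    exp (-y) ≤ 2 * (1 + y ^ 2)⁻¹ := by
  have hquad := quadratic_le_exp_of_nonneg hy
  calc exp (-y) = (exp y)⁻¹ := exp_neg y
    _ ≤ ((1 + y ^ 2) / 2)⁻¹ := inv_anti₀ (by positivity) (by nlinarith)
    _ = 2 * (1 + y ^ 2)⁻¹ := by rw [inv_div, div_eq_mul_inv]

lemma integrable_exp_neg_mul_sq_add_mul_inv_one_add_sq {b : ℝ} (hb : 0 < b) (c : ℝ) :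
    Integrable fun x : ℝ => exp (-b * x ^ 2) + c * (1 + x ^ 2)⁻¹ :=
  (integrable_exp_neg_mul_sq hb).add (integrable_inv_one_add_sq.const_mul c)

lemma integral_exp_neg_mul_sq_add_mul_inv_one_add_sq {b : ℝ} (hb : 0 < b) (c : ℝ) :
    ∫ x : ℝ, exp (-b * x ^ 2) + c * (1 + x ^ 2)⁻¹ = √(π / b) + c * π := by
  rw [integral_add (integrable_exp_neg_mul_sq hb) (integrable_inv_one_add_sq.const_mul c),
    integral_gaussian, integral_const_mul, integral_univ_inv_one_add_sq]

lemma le_sqrt_sq_add_sq (x a : ℝ) : a ≤ √(x ^ 2 + a ^ 2) :=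
  (le_abs_self a).trans (abs_le_sqrt (le_add_of_nonneg_left (sq_nonneg x)))

lemma lineIntegrand_nonneg (a x : ℝ) : 0 ≤ lineIntegrand a x := by
  unfold lineIntegrand
  positivity

section

variable {a : ℝ}

lemma exp_neg_two_mul_sqrt_sub_le (ha : 0 < a) (x : ℝ) :
    exp (-2 * (√(x ^ 2 + a ^ 2) - a)) ≤ exp (-(2 * a)⁻¹ * x ^ 2) + 2 * (1 + x ^ 2)⁻¹ := by
  set s := √(x ^ 2 + a ^ 2)
  have hs : s ^ 2 = x ^ 2 + a ^ 2 := sq_sqrt (by positivity)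
  have has : a ≤ s := le_sqrt_sq_add_sq x a
  rcases le_or_gt |x| (2 * a) with hx | hx
  · have hs3 : s ≤ 3 * a := sqrt_le_iff.2 ⟨by linarith, by nlinarith [sq_abs x, abs_nonneg x]⟩
    -- `x² = (s - a)(s + a)` with `s + a ≤ 4a`
    have hgauss : (2 * a)⁻¹ * x ^ 2 ≤ 2 * (s - a) := by
      rw [inv_mul_le_iff₀ (by positivity)]
      nlinarith
    calc exp (-2 * (s - a)) ≤ exp (-(2 * a)⁻¹ * x ^ 2) := exp_le_exp.2 (by linarith)
      _ ≤ _ := le_add_of_nonneg_right (by positivity)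
  · have hxs : |x| ≤ 2 * (s - a) := by nlinarith [sq_abs x, abs_nonneg x]
    calc exp (-2 * (s - a)) = exp (-(2 * (s - a))) := by ring_nf
      _ ≤ 2 * (1 + (2 * (s - a)) ^ 2)⁻¹ := exp_neg_le_two_mul_inv_one_add_sq (by linarith)
      _ ≤ 2 * (1 + x ^ 2)⁻¹ := by
        rw [← sq_abs x]
        gcongr
      _ ≤ _ := le_add_of_nonneg_left (by positivity)

lemma lineIntegrand_le (ha : 0 < a) (x : ℝ) :
    lineIntegrand a x ≤
      exp (-2 * a) / a * (exp (-(2 * a)⁻¹ * x ^ 2) + 2 * (1 + x ^ 2)⁻¹) := by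
  set s := √(x ^ 2 + a ^ 2)
  calc lineIntegrand a x = exp (-2 * a) * exp (-2 * (s - a)) / s := by
        rw [lineIntegrand, ← exp_add]
        congr 2
        ring
    _ ≤ exp (-2 * a) * (exp (-(2 * a)⁻¹ * x ^ 2) + 2 * (1 + x ^ 2)⁻¹) / a := by
        gcongr
        · exact exp_neg_two_mul_sqrt_sub_le ha x
        · exact le_sqrt_sq_add_sq x a
    _ = _ := by ring

lemma integrable_lineIntegrand (ha : 0 < a) : Integrable (lineIntegrand a) := by
  have hmeas : Measurable (lineIntegrand a) := by
    unfold lineIntegrand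
    fun_prop
  refine ((integrable_exp_neg_mul_sq_add_mul_inv_one_add_sq (b := (2 * a)⁻¹) (by positivity)
    2).const_mul (exp (-2 * a) / a)).mono' hmeas.aestronglyMeasurable (ae_of_all _ fun x => ?_)
  rw [norm_of_nonneg (lineIntegrand_nonneg a x)]
  exact lineIntegrand_le ha x

lemma integral_lineIntegrand_le (ha : 0 < a) :
    ∫ x, lineIntegrand a x ≤ exp (-2 * a) / a * (√(2 * π * a) + 2 * π) :=
  calc ∫ x, lineIntegrand a x
      ≤ ∫ x, exp (-2 * a) / a * (exp (-(2 * a)⁻¹ * x ^ 2) + 2 * (1 + x ^ 2)⁻¹) :=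
        integral_mono (integrable_lineIntegrand ha)
          ((integrable_exp_neg_mul_sq_add_mul_inv_one_add_sq (by positivity) 2).const_mul _)
          (lineIntegrand_le ha)
    _ = _ := by
        rw [integral_const_mul, integral_exp_neg_mul_sq_add_mul_inv_one_add_sq (by positivity),
          div_inv_eq_mul]
        ring_nf

lemma integral_lineIntegrand_le_of_one_le (ha : 1 ≤ a) :
    ∫ x, lineIntegrand a x ≤ (√(2 * π) + 2 * π) * (√a)⁻¹ * exp (-2 * a) := by
  have ha0 : 0 < a := by linarith
  have hsa : 1 ≤ √a := one_le_sqrt.2 ha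
  have hsq : √a ^ 2 = a := sq_sqrt ha0.le
  refine (integral_lineIntegrand_le ha0).trans ?_
  rw [sqrt_mul (by positivity), ← hsq, sqrt_sq (sqrt_nonneg a)]
  field_simp
  nlinarith [pi_pos]

lemma lineIntegrand_ge_of_sq_le (ha : 1 / 2 ≤ a) {x : ℝ} (hx : x ^ 2 ≤ a) :
    exp (-1) * exp (-2 * a) / (2 * a) ≤ lineIntegrand a x := by
  have hsa : √(x ^ 2 + a ^ 2) ≤ a + 1 / 2 := sqrt_le_iff.2 ⟨by linarith, by nlinarith⟩
  rw [lineIntegrand, ← exp_add]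
  exact div_le_div₀ (exp_pos _).le (exp_le_exp.2 (by linarith))
    ((by linarith : (0 : ℝ) < a).trans_le (le_sqrt_sq_add_sq x a)) (by linarith)

lemma integral_lineIntegrand_ge (ha : 1 / 2 ≤ a) :
    exp (-1) * (√a)⁻¹ * exp (-2 * a) ≤ ∫ x, lineIntegrand a x := by
  have ha0 : 0 < a := by linarith
  have hsq : √a ^ 2 = a := sq_sqrt ha0.le
  calc exp (-1) * (√a)⁻¹ * exp (-2 * a)
      = exp (-1) * exp (-2 * a) / (2 * a) * volume.real (Set.Icc (-√a) √a) := by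
        rw [volume_real_Icc, max_eq_left (by linarith [sqrt_nonneg a])]
        rw [← hsq, sqrt_sq (sqrt_nonneg a)]
        field_simp
        ring
    _ ≤ ∫ x in Set.Icc (-√a) √a, lineIntegrand a x :=
        setIntegral_ge_of_const_le_real measurableSet_Icc measure_Icc_lt_top.ne
          (fun x hx => lineIntegrand_ge_of_sq_le ha ((sq_le_sq' hx.1 hx.2).trans_eq hsq))
          (integrable_lineIntegrand ha0).integrableOn
    _ ≤ ∫ x, lineIntegrand a x :=
        setIntegral_le_integral (integrable_lineIntegrand ha0)
          (ae_of_all _ (lineIntegrand_nonneg a))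

end

/-- There exist constants `0 < c ≤ C` such that for all `a ≥ 1`,
`c a^{−1/2} e^{−2a} ≤ ∫_ℝ (x₁² + a²)^{−1/2} exp(−2(x₁² + a²)^{1/2}) dx₁ ≤ C a^{−1/2} e^{−2a}`. -/
theorem trace_line_integral_comparison :
    ∃ c C : ℝ, 0 < c ∧ c ≤ C ∧ ∀ a : ℝ, 1 ≤ a →
      c * a ^ (-(1 : ℝ) / 2) * Real.exp (-2 * a) ≤
        (∫ x : ℝ, Real.exp (-2 * Real.sqrt (x ^ 2 + a ^ 2)) / Real.sqrt (x ^ 2 + a ^ 2)) ∧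
      (∫ x : ℝ, Real.exp (-2 * Real.sqrt (x ^ 2 + a ^ 2)) / Real.sqrt (x ^ 2 + a ^ 2)) ≤
        C * a ^ (-(1 : ℝ) / 2) * Real.exp (-2 * a) := by
  refine ⟨exp (-1), √(2 * π) + 2 * π, exp_pos _, ?_, fun a ha => ?_⟩
  · linarith [exp_le_one_iff.2 (by norm_num : (-1 : ℝ) ≤ 0), sqrt_nonneg (2 * π), pi_gt_three]
  · rw [neg_div, rpow_neg (by linarith), ← sqrt_eq_rpow]
    exact ⟨integral_lineIntegrand_ge (by linarith), integral_lineIntegrand_le_of_one_le ha⟩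
end

section
/- Let H be a real Hilbert space, L : D(L) ⊂ H → H a densely defined self-adjoint operator, and U₂ ∈ D(L) with U₂ ≠ 0. Let P₂ : H → H be the orthogonal projection onto span{U₂} and V = (I − P₂)H = U₂^⊥. Define L̃ : D(L) ∩ V → V by L̃u = (I − P₂)Lu. Then L̃, viewed as a densely defined operator on the Hilbert space V, is self-adjoint, with domain D(L̃*) = D(L) ∩ V. -/
/-!
Write `K = U₂ᗮ`, so `Kᗮ = span{U₂}` is finite-dimensional and contained in `D(L)`. The
compression `L̃ = (I − P) L` is symmetric because `⟪(I − P) w, v⟫ = ⟪w, v⟫` for `v ∈ K`. For the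
reverse inclusion `D(L̃*) ⊆ D(L̃)`, take `y ∈ D(L̃*)` and split `x ∈ D(L)` as
`x = P_K x + P_{Kᗮ} x`, both pieces lying in `D(L)`. Then
`⟪y, L x⟫ = ⟪L̃* y, x⟫ + ⟪y, L P_{Kᗮ} x⟫`, and the last term is continuous in `x` because it factors
through `Kᗮ`. Hence `y ∈ D(L*) = D(L)`.
-/

open scoped RealInnerProductSpace

/-- Given an unbounded operator `L` on `H` and a closed subspace `K` admitting an orthogonal
projection, this is the compressed operator `L̃ = (I − P) L` on `K`, with domain
`D(L̃) = D(L) ∩ K`, where `I − P` is the orthogonal projection of `H` onto `K`. -/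
noncomputable def compressedOp {H : Type*} [NormedAddCommGroup H] [InnerProductSpace ℝ H]
    (K : Submodule ℝ H) [K.HasOrthogonalProjection] (L : H →ₗ.[ℝ] H) : K →ₗ.[ℝ] K :=
  { domain := L.domain.comap K.subtype
    toFun := K.orthogonalProjectionOnto.toLinearMap.comp
      (L.toFun.comp (K.subtype.restrict (fun _ hx => hx))) }

open scoped LinearPMap

section General

variable {𝕜 E : Type*} [RCLike 𝕜] [NormedAddCommGroup E] [InnerProductSpace 𝕜 E]

theorem Submodule.starProjection_mem_of_orthogonal_le (K : Submodule 𝕜 E)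
    [K.HasOrthogonalProjection] {D : Submodule 𝕜 E} (hK : Kᗮ ≤ D) {x : E} (hx : x ∈ D) :
    K.starProjection x ∈ D := by
  simpa using D.sub_mem hx (hK (K.sub_starProjection_mem_orthogonal x))

theorem IsSelfAdjoint.isFormalAdjoint_self [CompleteSpace E] {A : E →ₗ.[𝕜] E}
    (hA : IsSelfAdjoint A) : A.IsFormalAdjoint A := by
  simpa only [LinearPMap.isSelfAdjoint_def.mp hA] using
    LinearPMap.adjoint_isFormalAdjoint hA.dense_domain

end General

section Compression

variable {H : Type*} [NormedAddCommGroup H] [InnerProductSpace ℝ H]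
  {K : Submodule ℝ H} [K.HasOrthogonalProjection] (L : H →ₗ.[ℝ] H)

theorem compressedOp_apply (x : (compressedOp K L).domain) :
    compressedOp K L x = K.orthogonalProjectionOnto (L ⟨x, x.2⟩) := rfl

theorem inner_compressedOp_apply (v : K) (x : (compressedOp K L).domain) :
    ⟪v, compressedOp K L x⟫ = ⟪(v : H), L ⟨x, x.2⟩⟫ := by
  rw [compressedOp_apply, Submodule.inner_orthogonalProjectionOnto_eq_of_mem_left]

theorem LinearPMap.IsFormalAdjoint.compressedOp {L : H →ₗ.[ℝ] H} (hL : L.IsFormalAdjoint L) :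
    (compressedOp K L).IsFormalAdjoint (compressedOp K L) := fun x y => by
  rw [real_inner_comm, inner_compressedOp_apply, inner_compressedOp_apply, real_inner_comm]
  exact hL ⟨x, x.2⟩ ⟨y, y.2⟩

theorem dense_compressedOp_domain (hdense : Dense (L.domain : Set H)) (hK : Kᗮ ≤ L.domain) :
    Dense ((compressedOp K L).domain : Set K) := by
  have hsurj : Function.Surjective K.orthogonalProjectionOnto := fun v =>
    ⟨v, K.orthogonalProjectionOnto_mem_subspace_eq_self v⟩
  refine (hsurj.denseRange.dense_image K.orthogonalProjectionOnto.continuous hdense).mono ?_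
  rintro _ ⟨x, hx, rfl⟩
  exact K.starProjection_mem_of_orthogonal_le hK hx

theorem LinearPMap.map_eq_add_starProjection (hK : Kᗮ ≤ L.domain) (x : L.domain) :
    L x = L ⟨K.starProjection x, K.starProjection_mem_of_orthogonal_le hK x.2⟩ +
      L (Submodule.inclusion hK (Kᗮ.orthogonalProjectionOnto x)) := by
  rw [← LinearPMap.map_add]
  congr 1
  ext
  simp

variable [CompleteSpace H] [CompleteSpace K]

theorem adjoint_domain_compressedOp_le [FiniteDimensional ℝ Kᗮ] (hL : IsSelfAdjoint L)
    (hK : Kᗮ ≤ L.domain) : (compressedOp K L)†.domain ≤ (compressedOp K L).domain := by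
  intro y hy
  set g : K := (compressedOp K L)† ⟨y, hy⟩
  have hg (x : (compressedOp K L).domain) : ⟪(g : H), x⟫ = ⟪(y : H), L ⟨x, x.2⟩⟫ := by
    rw [← inner_compressedOp_apply, ← Submodule.coe_inner]
    exact LinearPMap.adjoint_isFormalAdjoint (dense_compressedOp_domain L hL.dense_domain hK)
      ⟨y, hy⟩ x
  let φ : Kᗮ →ₗ[ℝ] ℝ := (innerₛₗ ℝ (y : H)).comp (L.toFun.comp (Submodule.inclusion hK))
  have hsplit : ⇑((innerₛₗ ℝ (y : H)).comp L.toFun) =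
      fun x : L.domain => ⟪(g : H), x⟫ + φ (Kᗮ.orthogonalProjectionOnto x) := by
    funext x
    have hproj : ⟪(y : H), L ⟨K.starProjection x, K.starProjection_mem_of_orthogonal_le hK x.2⟩⟫
        = ⟪(g : H), x⟫ := by
      rw [← Submodule.inner_orthogonalProjectionOnto_eq_of_mem_left g]
      exact (hg ⟨K.orthogonalProjectionOnto x, K.starProjection_mem_of_orthogonal_le hK x.2⟩).symm
    rw [LinearMap.comp_apply, innerₛₗ_apply_apply, LinearPMap.toFun_eq_coe,
      L.map_eq_add_starProjection hK x, inner_add_right, hproj]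
    rfl
  have hyL : (y : H) ∈ L†.domain := by
    rw [LinearPMap.mem_adjoint_domain_iff, hsplit]
    exact (continuous_const.inner continuous_subtype_val).add
      (φ.continuous_of_finiteDimensional.comp
        (Kᗮ.orthogonalProjectionOnto.continuous.comp continuous_subtype_val))
  rwa [LinearPMap.isSelfAdjoint_def.mp hL] at hyL

theorem adjoint_compressedOp [FiniteDimensional ℝ Kᗮ] (hL : IsSelfAdjoint L)
    (hK : Kᗮ ≤ L.domain) : (compressedOp K L)† = compressedOp K L := by
  have hle : compressedOp K L ≤ (compressedOp K L)† :=
    hL.isFormalAdjoint_self.compressedOp.le_adjoint (dense_compressedOp_domain L hL.dense_domain hK)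
  exact (LinearPMap.eq_of_le_of_domain_eq hle
    (le_antisymm hle.1 (adjoint_domain_compressedOp_le L hL hK))).symm

end Compression

theorem compressed_operator_selfAdjoint_general
    {H : Type*} [NormedAddCommGroup H] [InnerProductSpace ℝ H] [CompleteSpace H]
    (L : H →ₗ.[ℝ] H) (hL : IsSelfAdjoint L)
    (U₂ : H) (hU₂dom : U₂ ∈ L.domain) :
    IsSelfAdjoint (compressedOp (ℝ ∙ U₂)ᗮ L) ∧
    (compressedOp (ℝ ∙ U₂)ᗮ L).adjoint.domain = L.domain.comap ((ℝ ∙ U₂)ᗮ).subtype := by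
  have hK : (ℝ ∙ U₂)ᗮᗮ ≤ L.domain := by
    rwa [Submodule.orthogonal_orthogonal, Submodule.span_singleton_le_iff_mem]
  have : FiniteDimensional ℝ (ℝ ∙ U₂)ᗮᗮ :=
    Submodule.finiteDimensional_of_le (Submodule.orthogonal_orthogonal _).le
  have hadj := adjoint_compressedOp L hL hK
  exact ⟨hadj, congrArg LinearPMap.domain hadj⟩

/-- Let `L` be a densely defined self-adjoint operator on a real Hilbert space `H` and
`U₂ ∈ D(L)`, `U₂ ≠ 0`.  Let `V = U₂^⊥` and define `L̃ : D(L) ∩ V → V`, `L̃u = (I − P₂) L u`,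
where `P₂` is the orthogonal projection onto `span{U₂}`.  Then `L̃`, viewed as a densely defined
operator on the Hilbert space `V`, is self-adjoint with `D(L̃*) = D(L) ∩ V`. -/
theorem compressed_operator_selfAdjoint
    {H : Type*} [NormedAddCommGroup H] [InnerProductSpace ℝ H] [CompleteSpace H]
    (L : H →ₗ.[ℝ] H) (hdense : Dense (L.domain : Set H)) (hL : IsSelfAdjoint L)
    (U₂ : H) (hU₂dom : U₂ ∈ L.domain) (hU₂ : U₂ ≠ 0) :
    IsSelfAdjoint (compressedOp (ℝ ∙ U₂)ᗮ L) ∧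
    (compressedOp (ℝ ∙ U₂)ᗮ L).adjoint.domain = L.domain.comap ((ℝ ∙ U₂)ᗮ).subtype :=
  compressed_operator_selfAdjoint_general L hL U₂ hU₂dom
end

section
/- Let u ∈ C²(ℝ²) be a bounded radial solution of u'' + u'/r = γ(u) on (0,∞) with γ ∈ C¹, γ(0) = 0, γ'(0) = 1, and suppose u(r) → 0 and u'(r) → 0 as r → ∞. Setting w₂ = ½(u − u'), there exists R > 0 such that for all r ≥ R the function r ↦ e^{r/2} |w₂(r)| is non-increasing; in particular |u(r) − u'(r)| ≤ C e^{−r/2} for r ≥ R and some constant C. -/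
/-!
Write the equation as `u'' = u + p` with `p = γ(u) - u - u'/r`; since `γ(t) - t = o(t)` and
`u → 0`, eventually `|p| ≤ (|u| + |u'|)/8`. Then `z = u u'` satisfies `z' ≥ z`, so `e^{-r} z` is
non-decreasing, and `z → 0` forces `u u' ≤ 0`. With that sign, `|u - u'| = |u| + |u'|` dominates
`p`, and `w = (u - u')/2` satisfies `w w' ≤ -w²/2`, i.e. `e^r w²` is non-increasing.
-/

open Filter Topology Set Real

lemma eventually_abs_sub_self_le {γ : ℝ → ℝ} (hγ : HasDerivAt γ 1 0) (hγ0 : γ 0 = 0)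
    {ε : ℝ} (hε : 0 < ε) : ∀ᶠ t in 𝓝 0, |γ t - t| ≤ ε * |t| := by
  simpa [hγ0] using hγ.isLittleO.def hε

lemma nonpos_of_le_deriv_of_tendsto_zero {f f' : ℝ → ℝ} {R : ℝ}
    (hf : ∀ x ≥ R, HasDerivAt f (f' x) x) (hle : ∀ x ≥ R, f x ≤ f' x)
    (hlim : Tendsto f atTop (𝓝 0)) {x : ℝ} (hx : R ≤ x) : f x ≤ 0 := by
  have hderiv : ∀ y ≥ R, HasDerivAt (fun y => exp (-y) * f y) (exp (-y) * (f' y - f y)) y := by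
    intro y hy
    exact ((hasDerivAt_neg y).exp.mul (hf y hy)).congr_deriv (by ring)
  have hmono : MonotoneOn (fun y => exp (-y) * f y) (Ici R) := by
    refine monotoneOn_of_hasDerivWithinAt_nonneg (convex_Ici R)
      (fun y hy => (hderiv y hy).continuousAt.continuousWithinAt)
      (fun y hy => (hderiv y (interior_subset hy)).hasDerivWithinAt)
      (fun y hy => ?_)
    nlinarith [hle y (interior_subset hy), exp_pos (-y)]
  by_contra! hpos
  obtain ⟨y, hfy, hxy⟩ := ((hlim.eventually (gt_mem_nhds hpos)).and (eventually_ge_atTop x)).exists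
  have hgrow : exp (-x) * f x ≤ exp (-y) * f y := hmono hx (hx.trans hxy) hxy
  have hexp : exp (-y) ≤ exp (-x) := exp_le_exp.mpr (by linarith)
  nlinarith [exp_pos (-y)]

lemma antitoneOn_exp_mul_abs_of_mul_deriv_le {w w' : ℝ → ℝ} {c R : ℝ}
    (hw : ∀ x ≥ R, HasDerivAt w (w' x) x) (hle : ∀ x ≥ R, w x * w' x ≤ -c * w x ^ 2) :
    AntitoneOn (fun x => exp (c * x) * |w x|) (Ici R) := by
  have hderiv : ∀ x ≥ R, HasDerivAt (fun x => exp (2 * c * x) * w x ^ 2)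
      (2 * exp (2 * c * x) * (c * w x ^ 2 + w x * w' x)) x := by
    intro x hx
    exact (((hasDerivAt_id x).const_mul (2 * c)).exp.mul ((hw x hx).pow 2)).congr_deriv
      (by simp only [id, mul_one, Pi.pow_apply]; ring)
  have hanti : AntitoneOn (fun x => exp (2 * c * x) * w x ^ 2) (Ici R) := by
    refine antitoneOn_of_hasDerivWithinAt_nonpos (convex_Ici R)
      (fun x hx => (hderiv x hx).continuousAt.continuousWithinAt)
      (fun x hx => (hderiv x (interior_subset hx)).hasDerivWithinAt)
      (fun x hx => ?_)
    nlinarith [hle x (interior_subset hx), exp_pos (2 * c * x)]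
  have hsq : ∀ x, exp (2 * c * x) * w x ^ 2 = (exp (c * x) * |w x|) ^ 2 := fun x => by
    rw [mul_pow, sq_abs, ← exp_nat_mul]; push_cast; ring_nf
  intro x hx y hy hxy
  have hsq_le := hanti hx hy hxy
  simp only [hsq] at hsq_le
  exact (pow_le_pow_iff_left₀ (by positivity) (by positivity) two_ne_zero).mp hsq_le

lemma mul_le_sq_add_mul_add {a b p : ℝ} (hp : |p| ≤ (|a| + |b|) / 8) :
    a * b ≤ b * b + a * (a + p) := by
  have hap : |a * p| ≤ |a| * ((|a| + |b|) / 8) := by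
    rw [abs_mul]; exact mul_le_mul_of_nonneg_left hp (abs_nonneg a)
  nlinarith [neg_abs_le (a * p), le_abs_self (a * b), abs_mul a b, sq_abs a, sq_abs b,
    sq_nonneg (|a| - |b|)]

lemma half_sub_mul_half_sub_le {a b p : ℝ} (hab : a * b ≤ 0) (hp : |p| ≤ (|a| + |b|) / 8) :
    (a - b) / 2 * ((b - (a + p)) / 2) ≤ -(1 / 2) * ((a - b) / 2) ^ 2 := by
  have hw : |a - b| = |a| + |b| := by
    rw [sub_eq_add_neg, ← abs_neg b, abs_add_eq_add_abs_iff, neg_nonneg, neg_nonpos]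
    exact mul_nonpos_iff.mp hab
  have hwp : |(a - b) * p| ≤ |a - b| * (|a - b| / 8) := by
    rw [abs_mul]; exact mul_le_mul_of_nonneg_left (hw ▸ hp) (abs_nonneg _)
  nlinarith [neg_abs_le ((a - b) * p), abs_mul_abs_self (a - b)]

lemma abs_sub_div_le {a b g r : ℝ} (hr : 8 ≤ r) (hg : |g| ≤ |a| / 8) :
    |g - b / r| ≤ (|a| + |b|) / 8 := by
  have : |b / r| ≤ |b| / 8 := by
    rw [abs_div, abs_of_pos (show 0 < r by linarith)]
    gcongr
  linarith [abs_sub g (b / r)]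

lemma le_mul_exp_neg_of_antitoneOn {g : ℝ → ℝ} {c R x : ℝ}
    (hg : AntitoneOn (fun x => exp (c * x) * g x) (Ici R)) (hx : R ≤ x) :
    g x ≤ exp (c * R) * g R * exp (-(c * x)) := by
  have hxR : exp (c * x) * g x ≤ exp (c * R) * g R := hg self_mem_Ici hx hx
  calc g x = exp (-(c * x)) * (exp (c * x) * g x) := by
        rw [← mul_assoc, ← exp_add, neg_add_cancel, exp_zero, one_mul]
    _ ≤ exp (-(c * x)) * (exp (c * R) * g R) := by gcongr
    _ = exp (c * R) * g R * exp (-(c * x)) := mul_comm _ _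

theorem radial_ode_exponential_decay_general
    (u γ : ℝ → ℝ)
    (hu : ContDiff ℝ 2 u) (hγ : ContDiff ℝ 1 γ)
    (hγ0 : γ 0 = 0) (hγ'0 : deriv γ 0 = 1)
    (hode : ∀ r : ℝ, 0 < r → deriv (deriv u) r + deriv u r / r = γ (u r))
    (hu0 : Tendsto u atTop (nhds 0))
    (hu'0 : Tendsto (deriv u) atTop (nhds 0)) :
    ∃ R : ℝ, 0 < R ∧
      AntitoneOn (fun r => Real.exp (r / 2) * |(u r - deriv u r) / 2|) (Set.Ici R) ∧
      ∃ C : ℝ, ∀ r : ℝ, R ≤ r → |u r - deriv u r| ≤ C * Real.exp (-r / 2) := by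
  have hu₁ (r : ℝ) : HasDerivAt u (deriv u r) r := (hu.differentiable two_ne_zero r).hasDerivAt
  have hu₂ (r : ℝ) : HasDerivAt (deriv u) (deriv (deriv u) r) r :=
    (hu.differentiable_deriv_two r).hasDerivAt
  have hγ₁ : HasDerivAt γ 1 0 := hγ'0 ▸ (hγ.differentiable one_ne_zero 0).hasDerivAt
  obtain ⟨R, hR8, hR⟩ := ((eventually_ge_atTop 8).and (eventually_forall_ge_atTop.mpr
    (hu0.eventually (eventually_abs_sub_self_le hγ₁ hγ0 (by norm_num : (0 : ℝ) < 1 / 8))))).exists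
  set p := fun r => γ (u r) - u r - deriv u r / r
  have hp : ∀ r ≥ R, |p r| ≤ (|u r| + |deriv u r|) / 8 := fun r hr =>
    abs_sub_div_le (hR8.trans hr) (by linarith [hR r hr])
  have hu'' : ∀ r ≥ R, deriv (deriv u) r = u r + p r := fun r hr => by
    linarith [hode r (by linarith)]
  have huu' : ∀ r ≥ R, u r * deriv u r ≤ 0 := fun r hr =>
    nonpos_of_le_deriv_of_tendsto_zero (f := fun r => u r * deriv u r)
      (fun r _ => (hu₁ r).mul (hu₂ r))
      (fun r hr => hu'' r hr ▸ mul_le_sq_add_mul_add (hp r hr)) (by simpa using hu0.mul hu'0) hr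
  have hanti := antitoneOn_exp_mul_abs_of_mul_deriv_le
    (c := 1 / 2) (w := fun r => (u r - deriv u r) / 2)
    (fun r _ => ((hu₁ r).sub (hu₂ r)).div_const 2)
    (fun r hr => hu'' r hr ▸ half_sub_mul_half_sub_le (huu' r hr) (hp r hr))
  refine ⟨R, by linarith, by simpa only [one_div, inv_mul_eq_div] using hanti,
    2 * (exp (1 / 2 * R) * |(u R - deriv u R) / 2|), fun r hr => ?_⟩
  have hdecay := le_mul_exp_neg_of_antitoneOn hanti hr
  rw [show -r / 2 = -(1 / 2 * r) by ring]
  calc |u r - deriv u r| = 2 * |(u r - deriv u r) / 2| := by rw [abs_div, abs_two]; ring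
    _ ≤ _ := by linarith

/-- Let `u` be a bounded `C²` radial solution of `u'' + u'/r = γ(u)` on `(0,∞)` with `γ ∈ C¹`,
`γ(0) = 0`, `γ'(0) = 1`, and `u(r) → 0`, `u'(r) → 0` as `r → ∞`.  Setting `w₂ = ½(u − u')`,
there is `R > 0` such that `r ↦ e^{r/2} |w₂(r)|` is non-increasing on `[R, ∞)`; in particular
`|u(r) − u'(r)| ≤ C e^{−r/2}` for `r ≥ R` and some constant `C`. -/
theorem radial_ode_exponential_decay
    (u γ : ℝ → ℝ)
    (hu : ContDiff ℝ 2 u) (hγ : ContDiff ℝ 1 γ)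
    (hγ0 : γ 0 = 0) (hγ'0 : deriv γ 0 = 1)
    (hbdd : ∃ Cu : ℝ, ∀ r : ℝ, |u r| ≤ Cu)
    (hode : ∀ r : ℝ, 0 < r → deriv (deriv u) r + deriv u r / r = γ (u r))
    (hu0 : Tendsto u atTop (nhds 0))
    (hu'0 : Tendsto (deriv u) atTop (nhds 0)) :
    ∃ R : ℝ, 0 < R ∧
      AntitoneOn (fun r => Real.exp (r / 2) * |(u r - deriv u r) / 2|) (Set.Ici R) ∧
      ∃ C : ℝ, ∀ r : ℝ, R ≤ r → |u r - deriv u r| ≤ C * Real.exp (-r / 2) :=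
  radial_ode_exponential_decay_general u γ hu hγ hγ0 hγ'0 hode hu0 hu'0
end
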